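/- arXiv:cs/0302027 — 2 statements merged into one kernel-verified Lean document; each statement's English description precedes it below -/
import Mathlib

section
/- There exists a tetrahedron in R³ all of whose face angles (the angles of its four triangular faces) are acute, but which has a dihedral angle greater than or equal to π/2. -/
open Real EuclideanGeometry

/-- The dihedral angle of the tetrahedron `abcd` along the edge `ab`:
the angle between the components of `c - a` and `d - a` orthogonal to `b - a`. -/
noncomputable def dihedralAngle (a b c d : EuclideanSpace ℝ (Fin 3)) : ℝ :=
  InnerProductGeometry.angle
    ((c - a) - ((inner ℝ (c - a) (b - a) : ℝ) / (inner ℝ (b - a) (b - a) : ℝ)) • (b - a))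
    ((d - a) - ((inner ℝ (d - a) (b - a) : ℝ) / (inner ℝ (b - a) (b - a) : ℝ)) • (b - a))

/-!
Take `a = (0,0,0)`, `b = (2,0,0)`, `c = (1,1,1)`, `d = (1,1,-1)`. Both `c` and `d` project onto
the midpoint `(1,0,0)` of `ab`, and the perpendiculars `(0,1,1)` and `(0,1,-1)` are orthogonal,
so the dihedral angle along `ab` is exactly `π/2`. Yet every face is an acute triangle: at each
vertex of each face the two edge vectors have positive inner product.
-/

theorem InnerProductGeometry.angle_lt_pi_div_two_iff_inner_pos {V : Type*}
    [NormedAddCommGroup V] [InnerProductSpace ℝ V] (x y : V) :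
    angle x y < π / 2 ↔ 0 < inner ℝ x y := by
  rw [angle, arccos_lt_pi_div_two]
  rcases eq_or_ne x 0 with rfl | hx
  · simp
  rcases eq_or_ne y 0 with rfl | hy
  · simp
  exact div_pos_iff_of_pos_right (by positivity)

theorem EuclideanGeometry.angle_lt_pi_div_two_iff_inner_pos {V P : Type*}
    [NormedAddCommGroup V] [InnerProductSpace ℝ V] [MetricSpace P] [NormedAddTorsor V P]
    (p₁ p₂ p₃ : P) : ∠ p₁ p₂ p₃ < π / 2 ↔ 0 < inner ℝ (p₁ -ᵥ p₂) (p₃ -ᵥ p₂) :=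
  InnerProductGeometry.angle_lt_pi_div_two_iff_inner_pos _ _

namespace EuclideanSpace

theorem toLp_add_toLp_three (x₀ x₁ x₂ y₀ y₁ y₂ : ℝ) :
    !₂[x₀, x₁, x₂] + !₂[y₀, y₁, y₂] = !₂[x₀ + y₀, x₁ + y₁, x₂ + y₂] := by
  simp [← WithLp.toLp_add]

theorem toLp_sub_toLp_three (x₀ x₁ x₂ y₀ y₁ y₂ : ℝ) :
    !₂[x₀, x₁, x₂] - !₂[y₀, y₁, y₂] = !₂[x₀ - y₀, x₁ - y₁, x₂ - y₂] := by
  simp [← WithLp.toLp_sub]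

theorem smul_toLp_three (c x₀ x₁ x₂ : ℝ) : c • !₂[x₀, x₁, x₂] = !₂[c * x₀, c * x₁, c * x₂] := by
  simp [← WithLp.toLp_smul]

theorem toLp_three_eq_zero_iff (x₀ x₁ x₂ : ℝ) :
    !₂[x₀, x₁, x₂] = 0 ↔ x₀ = 0 ∧ x₁ = 0 ∧ x₂ = 0 := by
  simp [← WithLp.toLp_zero]

theorem inner_toLp_three (x₀ x₁ x₂ y₀ y₁ y₂ : ℝ) :
    inner ℝ !₂[x₀, x₁, x₂] !₂[y₀, y₁, y₂] = x₀ * y₀ + x₁ * y₁ + x₂ * y₂ := by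
  simp only [PiLp.inner_apply, Fin.sum_univ_three]
  simp only [Matrix.cons_val, RCLike.inner_apply, conj_trivial]
  ring

end EuclideanSpace

open EuclideanSpace

theorem sliver_affineIndependent :
    AffineIndependent ℝ ![!₂[0, 0, 0], !₂[2, 0, 0], !₂[1, 1, 1], !₂[(1 : ℝ), 1, -1]] := by
  rw [affineIndependent_iff_of_fintype]
  intro w hw hs
  rw [Finset.univ.weightedVSub_eq_linear_combination hw, Fin.sum_univ_four] at hs
  rw [Fin.sum_univ_four] at hw
  simp only [Matrix.cons_val, smul_toLp_three, toLp_add_toLp_three, toLp_three_eq_zero_iff] at hs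
  obtain ⟨h₀, h₁, h₂⟩ := hs
  have hw₃ : w 3 = 0 := by linarith
  have hw₂ : w 2 = 0 := by linarith
  have hw₁ : w 1 = 0 := by linarith
  have hw₀ : w 0 = 0 := by linarith
  intro i
  fin_cases i <;> assumption

theorem sliver_dihedralAngle :
    dihedralAngle !₂[0, 0, 0] !₂[2, 0, 0] !₂[1, 1, 1] !₂[1, 1, -1] = π / 2 := by
  rw [dihedralAngle, ← InnerProductGeometry.inner_eq_zero_iff_angle_eq_pi_div_two]
  simp only [toLp_sub_toLp_three, inner_toLp_three, smul_toLp_three]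
  norm_num

/-- There is a (nondegenerate) tetrahedron all of whose twelve face angles are acute,
yet some dihedral angle is at least `π/2`. -/
theorem exists_face_acute_dihedral_nonacute_tetra :
    ∃ a b c d : EuclideanSpace ℝ (Fin 3),
      AffineIndependent ℝ ![a, b, c, d] ∧
      (∠ b a c < π / 2 ∧ ∠ a b c < π / 2 ∧ ∠ a c b < π / 2 ∧
       ∠ b a d < π / 2 ∧ ∠ a b d < π / 2 ∧ ∠ a d b < π / 2 ∧
       ∠ c a d < π / 2 ∧ ∠ a c d < π / 2 ∧ ∠ a d c < π / 2 ∧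
       ∠ c b d < π / 2 ∧ ∠ b c d < π / 2 ∧ ∠ b d c < π / 2) ∧
      (π / 2 ≤ dihedralAngle a b c d ∨ π / 2 ≤ dihedralAngle a c b d ∨
       π / 2 ≤ dihedralAngle a d b c ∨ π / 2 ≤ dihedralAngle b c a d ∨
       π / 2 ≤ dihedralAngle b d a c ∨ π / 2 ≤ dihedralAngle c d a b) := by
  refine ⟨_, _, _, _, sliver_affineIndependent, ?_, Or.inl sliver_dihedralAngle.ge⟩
  refine ⟨?_, ?_, ?_, ?_, ?_, ?_, ?_, ?_, ?_, ?_, ?_, ?_⟩ <;>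
    norm_num [angle_lt_pi_div_two_iff_inner_pos, vsub_eq_sub, toLp_sub_toLp_three,
      inner_toLp_three]
end

section
/- Let ε > 0 be sufficiently small, and define a = (−ε,−ε,−ε), b = (1,0,0), c = (0,1,0), d = (0,0,1), e = (2/3+ε, 2/3+ε, 2/3+ε) in R³. Then both tetrahedra abcd and bcde have all six dihedral angles strictly less than π/2. -/
open Real EuclideanGeometry

/-- A point of `ℝ³` given by its three coordinates. -/
noncomputable def pt (x y z : ℝ) : EuclideanSpace ℝ (Fin 3) :=
  (WithLp.equiv 2 (Fin 3 → ℝ)).symm ![x, y, z]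

/-- A tetrahedron is acute if all six of its dihedral angles are strictly less than `π/2`. -/
def IsAcuteTetra (a b c d : EuclideanSpace ℝ (Fin 3)) : Prop :=
  dihedralAngle a b c d < π / 2 ∧ dihedralAngle a c b d < π / 2 ∧
  dihedralAngle a d b c < π / 2 ∧ dihedralAngle b c a d < π / 2 ∧
  dihedralAngle b d a c < π / 2 ∧ dihedralAngle c d a b < π / 2

/-!
The dihedral angle along the edge `ab` is the angle between the components of `u = c - a` and
`v = d - a` orthogonal to `w = b - a`, whose inner product is `⟪u, v⟫ - ⟪u, w⟫ ⟪v, w⟫ / ‖w‖²`.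
Hence it is acute as soon as `⟪u, w⟫ ⟪v, w⟫ < ⟪u, v⟫ ‖w‖²`. For the two given tetrahedra the
twelve resulting inequalities are polynomial in `ε` and hold for every `ε > 0`, so `ε₀ = 1` works.
-/

namespace InnerProductGeometry

variable {V : Type*} [NormedAddCommGroup V] [InnerProductSpace ℝ V]

theorem angle_lt_pi_div_two_of_inner_pos {x y : V} (h : 0 < (inner ℝ x y : ℝ)) :
    angle x y < π / 2 := by
  have hx : x ≠ 0 := by rintro rfl; simp at h
  have hy : y ≠ 0 := by rintro rfl; simp at h
  rw [angle, Real.arccos_lt_pi_div_two]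
  exact div_pos h (mul_pos (norm_pos_iff.mpr hx) (norm_pos_iff.mpr hy))

theorem inner_sub_proj_sub_proj (u v w : V) :
    (inner ℝ (u - ((inner ℝ u w : ℝ) / (inner ℝ w w : ℝ)) • w)
      (v - ((inner ℝ v w : ℝ) / (inner ℝ w w : ℝ)) • w) : ℝ) =
      (inner ℝ u v : ℝ) - (inner ℝ u w : ℝ) * (inner ℝ v w : ℝ) / (inner ℝ w w : ℝ) := by
  rcases eq_or_ne w 0 with rfl | hw
  · simp
  simp only [inner_sub_left, inner_sub_right, real_inner_smul_left, real_inner_smul_right,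
    real_inner_comm v w]
  field_simp
  ring

theorem angle_sub_proj_lt_pi_div_two {u v w : V}
    (h : (inner ℝ u w : ℝ) * (inner ℝ v w : ℝ) < (inner ℝ u v : ℝ) * (inner ℝ w w : ℝ)) :
    angle (u - ((inner ℝ u w : ℝ) / (inner ℝ w w : ℝ)) • w)
      (v - ((inner ℝ v w : ℝ) / (inner ℝ w w : ℝ)) • w) < π / 2 := by
  have hw : 0 < (inner ℝ w w : ℝ) := by
    refine real_inner_self_pos.mpr ?_
    rintro rfl
    simp at h
  apply angle_lt_pi_div_two_of_inner_pos
  rwa [inner_sub_proj_sub_proj, sub_pos, div_lt_iff₀ hw]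

end InnerProductGeometry

theorem dihedralAngle_lt_pi_div_two {a b c d : EuclideanSpace ℝ (Fin 3)}
    (h : (inner ℝ (c - a) (b - a) : ℝ) * (inner ℝ (d - a) (b - a) : ℝ) <
      (inner ℝ (c - a) (d - a) : ℝ) * (inner ℝ (b - a) (b - a) : ℝ)) :
    dihedralAngle a b c d < π / 2 :=
  InnerProductGeometry.angle_sub_proj_lt_pi_div_two h

theorem inner_pt_pt (x y z x' y' z' : ℝ) :
    (inner ℝ (pt x y z) (pt x' y' z') : ℝ) = x * x' + y * y' + z * z' := by
  simp [pt, PiLp.inner_apply, Fin.sum_univ_three, mul_comm]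

theorem pt_sub_pt (x y z x' y' z' : ℝ) :
    pt x y z - pt x' y' z' = pt (x - x') (y - y') (z - z') := by
  ext i
  fin_cases i <;> simp [pt]

/-- For all sufficiently small `ε > 0`, both tetrahedra `abcd` and `bcde`, where
`a = (−ε,−ε,−ε)`, `b = (1,0,0)`, `c = (0,1,0)`, `d = (0,0,1)`,
`e = (2/3+ε, 2/3+ε, 2/3+ε)`, are acute. -/
theorem two_acute_tetrahedra :
    ∃ ε₀ : ℝ, 0 < ε₀ ∧ ∀ ε : ℝ, 0 < ε → ε < ε₀ →
      IsAcuteTetra (pt (-ε) (-ε) (-ε)) (pt 1 0 0) (pt 0 1 0) (pt 0 0 1) ∧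
      IsAcuteTetra (pt 1 0 0) (pt 0 1 0) (pt 0 0 1)
        (pt (2/3 + ε) (2/3 + ε) (2/3 + ε)) := by
  refine ⟨1, one_pos, fun ε hε _ => ?_⟩
  constructor <;>
  · refine ⟨?_, ?_, ?_, ?_, ?_, ?_⟩ <;>
    · apply dihedralAngle_lt_pi_div_two
      simp only [pt_sub_pt, inner_pt_pt]
      nlinarith [mul_pos hε hε]
end
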